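/- Let h : M → L be a frame homomorphism with right adjoint f : L → M, and suppose that for every x ∈ M and every a ∈ L with a ≪ h(x)* there exists b ∈ M with a ≤ h(b) and b ≪ x*. Then the image under f of every complemented element of L is complemented in M: if c ∈ L satisfies c ∨ c* = 1 then f(c) ∨ f(c)* = 1. -/

import Mathlib

/-!
A complemented `c` has `cᶜ ≪ cᶜ`, and `cᶜ ≤ (h (f c))ᶜ` because `h (f c) ≤ c`, so
`cᶜ ≪ (h (f c))ᶜ`. The hypothesis then gives `b` with `cᶜ ≤ h b` and `b ≪ (f c)ᶜ`, hence
`bᶜ ⊔ (f c)ᶜ = ⊤`. Finally `h bᶜ ≤ (h b)ᶜ ≤ cᶜᶜ = c`, so `bᶜ ≤ f c` by adjunction and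
`f c ⊔ (f c)ᶜ ≥ bᶜ ⊔ (f c)ᶜ = ⊤`.
-/

/-- `b` is completely below `a`. -/
def CompletelyBelow {L : Type*} [Order.Frame L] (b a : L) : Prop :=
  ∃ c : ℚ → L, c 0 = b ∧ c 1 = a ∧
    ∀ p q : ℚ, p ∈ Set.Icc (0 : ℚ) 1 → q ∈ Set.Icc (0 : ℚ) 1 → p < q → (c p)ᶜ ⊔ c q = ⊤

theorem compl_compl_of_sup_compl_eq_top {α : Type*} [HeytingAlgebra α] {a : α}
    (ha : a ⊔ aᶜ = ⊤) : aᶜᶜ = a :=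
  IsCompl.compl_eq ⟨disjoint_compl_left, codisjoint_iff.2 (sup_comm a aᶜ ▸ ha)⟩

theorem map_compl_le_compl_map {α β F : Type*} [HeytingAlgebra α] [HeytingAlgebra β]
    [FunLike F α β] [BotHomClass F α β] [InfHomClass F α β] (h : F) (a : α) :
    h aᶜ ≤ (h a)ᶜ :=
  (disjoint_compl_left.map h).le_compl_right

section CompletelyBelow

variable {L : Type*} [Order.Frame L] {a b : L}

theorem CompletelyBelow.compl_sup_eq_top (hab : CompletelyBelow a b) : aᶜ ⊔ b = ⊤ := by
  obtain ⟨c, hc0, hc1, hc⟩ := hab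
  simpa [hc0, hc1] using hc 0 1 (by norm_num) (by norm_num) one_pos

theorem completelyBelow_of_le (ha : aᶜ ⊔ a = ⊤) (hab : a ≤ b) : CompletelyBelow a b := by
  refine ⟨fun q => if q = 1 then b else a, by simp, by simp, ?_⟩
  intro p q _ hq hpq
  have hp : p ≠ 1 := (hpq.trans_le hq.2).ne
  dsimp only
  rw [if_neg hp]
  refine top_le_iff.1 (ha ▸ sup_le_sup_left ?_ _)
  split_ifs
  · exact hab
  · exact le_rfl

end CompletelyBelow

/-- If the right adjoint `f` of `h : M → L` satisfies the `𝔖_open β`-map condition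
(`a ≪ (h x)ᶜ` implies there is `b` with `a ≤ h b` and `b ≪ xᶜ`), then `f` sends
complemented elements of `L` to complemented elements of `M`. -/
theorem image_of_complemented_is_complemented {L M : Type*} [Order.Frame L] [Order.Frame M]
    (h : FrameHom M L) (f : L → M) (gc : GaloisConnection h f)
    (hyp : ∀ (x : M) (a : L), CompletelyBelow a ((h x)ᶜ) →
      ∃ b : M, a ≤ h b ∧ CompletelyBelow b (xᶜ)) :
    ∀ c : L, c ⊔ cᶜ = ⊤ → f c ⊔ (f c)ᶜ = ⊤ := by
  intro c hc
  have hcc : cᶜᶜ = c := compl_compl_of_sup_compl_eq_top hc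
  have hbelow : CompletelyBelow cᶜ (h (f c))ᶜ :=
    completelyBelow_of_le (by rwa [hcc]) (compl_anti (gc.l_u_le c))
  obtain ⟨b, hcb, hb⟩ := hyp (f c) cᶜ hbelow
  have hbc : bᶜ ≤ f c :=
    gc.le_u ((map_compl_le_compl_map h b).trans (hcc ▸ compl_anti hcb))
  exact top_le_iff.1 (hb.compl_sup_eq_top ▸ sup_le_sup_right hbc _)
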